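/- arXiv:1508.00406 — 2 statements merged into one kernel-verified Lean document; each statement's English description precedes it below -/
import Mathlib

section
/- Let D be the n-th Weyl algebra over ℂ (n ≥ 1), and let α₁,...,αₙ ∈ ℂ with α₁ ∉ {0, −1, −2, ...}. Let I = ∑ᵢ₌₁ⁿ D·(zᵢ∂ᵢ + αᵢ) be the left ideal generated by the operators zᵢ∂ᵢ + αᵢ. If m ∈ D satisfies z₁·m ∈ I, then m ∈ I. In other words, multiplication by z₁ is injective on the left D-module M = D/I. -/
/-!
The `n`-th Weyl algebra over `ℂ`, realized concretely as the subalgebra of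
`ℂ`-linear endomorphisms of the polynomial ring `ℂ[z₁,…,zₙ]` generated by the
multiplication operators `zᵢ` and the partial derivative operators `∂ᵢ`
(these satisfy `[∂ᵢ, zⱼ] = δᵢⱼ`, all other generators commuting).
-/

open MvPolynomial

set_option synthInstance.maxHeartbeats 1000000
set_option maxHeartbeats 1000000

/-- The multiplication operator `zᵢ`. -/
noncomputable def zEnd (n : ℕ) (i : Fin n) : Module.End ℂ (MvPolynomial (Fin n) ℂ) :=
  LinearMap.mulLeft ℂ (X i)

/-- The partial derivative operator `∂ᵢ`. -/
noncomputable def dEnd (n : ℕ) (i : Fin n) : Module.End ℂ (MvPolynomial (Fin n) ℂ) :=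
  (pderiv i).toLinearMap

/-- The `n`-th Weyl algebra `D = ℂ⟨z₁,…,zₙ,∂₁,…,∂ₙ⟩` over `ℂ`. -/
noncomputable def Weyl (n : ℕ) : Subalgebra ℂ (Module.End ℂ (MvPolynomial (Fin n) ℂ)) :=
  Algebra.adjoin ℂ (Set.range (zEnd n) ∪ Set.range (dEnd n))

noncomputable instance (n : ℕ) : Ring (Weyl n) := inferInstance
noncomputable instance (n : ℕ) : Algebra ℂ (Weyl n) := inferInstance

/-- The generator `zᵢ` as an element of the Weyl algebra. -/
noncomputable def zW (n : ℕ) (i : Fin n) : Weyl n :=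
  ⟨zEnd n i, Algebra.subset_adjoin (Or.inl ⟨i, rfl⟩)⟩

/-- The generator `∂ᵢ` as an element of the Weyl algebra. -/
noncomputable def dW (n : ℕ) (i : Fin n) : Weyl n :=
  ⟨dEnd n i, Algebra.subset_adjoin (Or.inr ⟨i, rfl⟩)⟩

/-!
Grade `D` by the degree in `z₁`: `z₁` has degree `1`, `∂₁` degree `-1` and the other generators
degree `0`. The piece of degree `k` lies in the `k`-eigenspace of `ad θ` for the Euler operator
`θ = z₁∂₁`, so the pieces are independent and `D` is a graded ring. The generators `zᵢ∂ᵢ + αᵢ` of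
`I` have degree `0`, hence `I` is homogeneous and it suffices to treat `m` of degree `j`.

If `j ≥ 0`, the homogeneous element `z₁m` of `I` of positive degree can be written with
coefficients of the same positive degree; a word of degree `k ≥ 0` is left divisible by `z₁ᵏ`,
so `z₁m = z₁w` with `w ∈ I`, and `m = w` since `z₁` is left regular.
If `j < 0`, then `(α₁ - j - 1) m = m (z₁∂₁ + α₁) - ∂₁ (z₁m) ∈ I`, and `α₁ ≠ j + 1` by hypothesis.
-/

theorem lie_mul_eq_smul_of_lie_eq_smul {R A : Type*} [CommRing R] [Ring A] [Algebra R A]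
    {t a b : A} {r s : R} (ha : ⁅t, a⁆ = r • a) (hb : ⁅t, b⁆ = s • b) :
    ⁅t, a * b⁆ = (r + s) • (a * b) := by
  rw [Ring.lie_def] at *
  calc t * (a * b) - a * b * t = (t * a - a * t) * b + a * (t * b - b * t) := by noncomm_ring
    _ = (r + s) • (a * b) := by rw [ha, hb, add_smul, smul_mul_assoc, mul_smul_comm]

theorem mul_pow_succ_of_mul_eq_mul_add_one {R : Type*} [Ring R] {d z : R}
    (h : d * z = z * d + 1) (m : ℕ) : d * z ^ (m + 1) = z ^ m * (z * d + (m + 1)) := by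
  induction m with
  | zero => simp [h]
  | succ m ih =>
    rw [pow_succ, ← mul_assoc, ih, mul_assoc, add_mul, mul_assoc z d, h, pow_succ, mul_assoc,
      ← Nat.cast_succ, (Nat.cast_commute _ z).eq]
    push_cast
    noncomm_ring

theorem Submodule.smul_injective_quotient_of_mul_mem {A : Type*} [Ring A] {I : Submodule A A}
    {a : A} (h : ∀ m, a * m ∈ I → m ∈ I) : Function.Injective fun x : A ⧸ I => a • x := by
  rintro ⟨x⟩ ⟨y⟩ hxy
  have hxy' : Submodule.Quotient.mk (a * x) = (Submodule.Quotient.mk (a * y) : A ⧸ I) := hxy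
  rw [Submodule.Quotient.eq, ← mul_sub] at hxy'
  exact (Submodule.Quotient.eq I).mpr (h _ hxy')

theorem Ideal.exists_homogeneous_fun_of_mem_span_range {ι σ A κ : Type*} [DecidableEq ι]
    [AddMonoid ι] [Semiring A] [SetLike σ A] [AddSubmonoidClass σ A] {𝒜 : ι → σ} [GradedRing 𝒜]
    [Fintype κ] {g : κ → A} (hg : ∀ i, g i ∈ 𝒜 0) {k : ι} {x : A} (hx : x ∈ 𝒜 k)
    (hxI : x ∈ Ideal.span (Set.range g)) : ∃ c : κ → A, (∀ i, c i ∈ 𝒜 k) ∧ ∑ i, c i * g i = x := by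
  obtain ⟨c, rfl⟩ := Ideal.mem_span_range_iff_exists_fun.mp hxI
  refine ⟨fun i => DirectSum.decompose 𝒜 (c i) k, fun i => SetLike.coe_mem _, ?_⟩
  rw [← DirectSum.decompose_of_mem_same 𝒜 hx, DirectSum.decompose_sum, DFinsupp.finsetSum_apply,
    AddSubmonoidClass.coe_finsetSum]
  exact Finset.sum_congr rfl fun i _ =>
    (DirectSum.coe_decompose_mul_of_right_mem_zero 𝒜 (hg i)).symm

namespace Weyl

variable {n : ℕ}

@[simp] theorem coe_zW_apply (i : Fin n) (f : MvPolynomial (Fin n) ℂ) :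
    (zW n i : Module.End ℂ (MvPolynomial (Fin n) ℂ)) f = X i * f := rfl

@[simp] theorem coe_dW_apply (i : Fin n) (f : MvPolynomial (Fin n) ℂ) :
    (dW n i : Module.End ℂ (MvPolynomial (Fin n) ℂ)) f = pderiv i f := rfl

theorem ext_apply {x y : Weyl n}
    (h : ∀ f, (x : Module.End ℂ (MvPolynomial (Fin n) ℂ)) f = (y : Module.End ℂ _) f) : x = y :=
  Subtype.ext (LinearMap.ext h)

theorem commute_zW (i j : Fin n) : Commute (zW n i) (zW n j) :=
  ext_apply fun f => by simp only [MulMemClass.coe_mul, Module.End.mul_apply, coe_zW_apply]; ring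

theorem commute_dW (i j : Fin n) : Commute (dW n i) (dW n j) := by
  classical
  have h : ⁅pderiv (R := ℂ) i, pderiv (R := ℂ) j⁆ = 0 := derivation_ext fun k => by
    rw [Derivation.commutator_apply]
    simp only [pderiv_X, Pi.single_apply]
    split_ifs <;> simp
  refine ext_apply fun f => ?_
  simpa [Derivation.commutator_apply, sub_eq_zero] using congr($h f)

theorem commute_dW_zW {i j : Fin n} (h : i ≠ j) : Commute (dW n i) (zW n j) :=
  ext_apply fun f => by simp [pderiv_X_of_ne h.symm]

theorem dW_mul_zW_self (i : Fin n) : dW n i * zW n i = zW n i * dW n i + 1 :=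
  ext_apply fun f => by simp [add_comm]

theorem isLeftRegular_zW (i : Fin n) : IsLeftRegular (zW n i) := fun x y h =>
  ext_apply fun f => mul_left_cancel₀ (X_ne_zero i) <| by
    simpa using congr(($h : Module.End ℂ (MvPolynomial (Fin n) ℂ)) f)

variable (i₀ : Fin n)

noncomputable def euler : Weyl n := zW n i₀ * dW n i₀

theorem lie_euler_zW_self : ⁅euler i₀, zW n i₀⁆ = (1 : ℂ) • zW n i₀ := by
  rw [Ring.lie_def, euler, mul_assoc, dW_mul_zW_self, one_smul]
  noncomm_ring

theorem lie_euler_dW_self : ⁅euler i₀, dW n i₀⁆ = (-1 : ℂ) • dW n i₀ := by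
  rw [Ring.lie_def, euler, mul_assoc, ← mul_assoc (dW n i₀), dW_mul_zW_self, neg_one_smul]
  noncomm_ring

theorem lie_euler_zW {i : Fin n} (h : i ≠ i₀) : ⁅euler i₀, zW n i⁆ = (0 : ℂ) • zW n i := by
  rw [zero_smul, ← commute_iff_lie_eq]
  exact (commute_zW i₀ i).mul_left (commute_dW_zW h.symm)

theorem lie_euler_dW {i : Fin n} (h : i ≠ i₀) : ⁅euler i₀, dW n i⁆ = (0 : ℂ) • dW n i := by
  rw [zero_smul, ← commute_iff_lie_eq]
  exact (commute_dW_zW h).symm.mul_left (commute_dW i₀ i)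

inductive IsWord : ℤ → Weyl n → Prop
  | one : IsWord 0 1
  | zW_self_mul {k : ℤ} {x : Weyl n} : IsWord k x → IsWord (k + 1) (zW n i₀ * x)
  | dW_self_mul {k : ℤ} {x : Weyl n} : IsWord k x → IsWord (k - 1) (dW n i₀ * x)
  | zW_mul {i : Fin n} {k : ℤ} {x : Weyl n} : i ≠ i₀ → IsWord k x → IsWord k (zW n i * x)
  | dW_mul {i : Fin n} {k : ℤ} {x : Weyl n} : i ≠ i₀ → IsWord k x → IsWord k (dW n i * x)

noncomputable def grading (k : ℤ) : Submodule ℂ (Weyl n) :=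
  Submodule.span ℂ {x | IsWord i₀ k x}

noncomputable def adEuler : Module.End ℂ (Weyl n) :=
  LinearMap.mulLeft ℂ (euler i₀) - LinearMap.mulRight ℂ (euler i₀)

noncomputable def eulerIdeal (α : Fin n → ℂ) : Ideal (Weyl n) :=
  Ideal.span (Set.range fun i => zW n i * dW n i + algebraMap ℂ (Weyl n) (α i))

variable {i₀}

theorem IsWord.mul {k l : ℤ} {x y : Weyl n} (hx : IsWord i₀ k x) (hy : IsWord i₀ l y) :
    IsWord i₀ (k + l) (x * y) := by
  induction hx with
  | one => simpa using hy
  | zW_self_mul _ ih => rw [add_right_comm, mul_assoc]; exact ih.zW_self_mul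
  | dW_self_mul _ ih => rw [sub_add_eq_add_sub, mul_assoc]; exact ih.dW_self_mul
  | zW_mul h _ ih => rw [mul_assoc]; exact ih.zW_mul h
  | dW_mul h _ ih => rw [mul_assoc]; exact ih.dW_mul h

theorem IsWord.lie_euler {k : ℤ} {x : Weyl n} (hx : IsWord i₀ k x) :
    ⁅euler i₀, x⁆ = (k : ℂ) • x := by
  induction hx with
  | one => simp [Ring.lie_def]
  | zW_self_mul _ ih =>
    rw [lie_mul_eq_smul_of_lie_eq_smul (lie_euler_zW_self i₀) ih]; push_cast; ring_nf
  | dW_self_mul _ ih =>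
    rw [lie_mul_eq_smul_of_lie_eq_smul (lie_euler_dW_self i₀) ih]; push_cast; ring_nf
  | zW_mul h _ ih => rw [lie_mul_eq_smul_of_lie_eq_smul (lie_euler_zW i₀ h) ih, zero_add]
  | dW_mul h _ ih => rw [lie_mul_eq_smul_of_lie_eq_smul (lie_euler_dW i₀ h) ih, zero_add]

theorem IsWord.pow_dvd {k : ℤ} {x : Weyl n} (hx : IsWord i₀ k x) (hk : 0 ≤ k) :
    zW n i₀ ^ k.toNat ∣ x := by
  induction hx with
  | one => simp
  | @zW_self_mul k x _ ih =>
    rcases lt_or_ge k 0 with hk' | hk'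
    · rw [show k + 1 = 0 by omega]; simp
    · rw [show (k + 1).toNat = k.toNat + 1 by omega, pow_succ']
      exact mul_dvd_mul_left _ (ih hk')
  | @dW_self_mul k x _ ih =>
    obtain ⟨y, rfl⟩ := ih (by omega)
    obtain ⟨m, hm⟩ : ∃ m : ℕ, k.toNat = m + 1 := ⟨(k - 1).toNat, by omega⟩
    rw [hm, ← mul_assoc, mul_pow_succ_of_mul_eq_mul_add_one (dW_mul_zW_self i₀),
      show (k - 1).toNat = m by omega, mul_assoc]
    exact dvd_mul_right _ _
  | zW_mul h _ ih =>
    obtain ⟨y, rfl⟩ := ih hk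
    exact ⟨_, ((commute_zW _ _).pow_right _).left_comm y⟩
  | dW_mul h _ ih =>
    obtain ⟨y, rfl⟩ := ih hk
    exact ⟨_, ((commute_dW_zW h).pow_right _).left_comm y⟩

theorem IsWord.mem_grading {k : ℤ} {x : Weyl n} (hx : IsWord i₀ k x) : x ∈ grading i₀ k :=
  Submodule.subset_span hx

theorem zW_self_mem_grading : zW n i₀ ∈ grading i₀ 1 := by
  simpa using (IsWord.one.zW_self_mul (i₀ := i₀)).mem_grading

theorem dW_self_mem_grading : dW n i₀ ∈ grading i₀ (-1) := by
  simpa using (IsWord.one.dW_self_mul (i₀ := i₀)).mem_grading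

theorem zW_mem_grading {i : Fin n} (h : i ≠ i₀) : zW n i ∈ grading i₀ 0 := by
  simpa using (IsWord.one.zW_mul h).mem_grading

theorem dW_mem_grading {i : Fin n} (h : i ≠ i₀) : dW n i ∈ grading i₀ 0 := by
  simpa using (IsWord.one.dW_mul h).mem_grading

theorem mul_mem_grading {k l : ℤ} {x y : Weyl n} (hx : x ∈ grading i₀ k)
    (hy : y ∈ grading i₀ l) : x * y ∈ grading i₀ (k + l) := by
  have : grading i₀ k * grading i₀ l ≤ grading i₀ (k + l) := by
    rw [grading, grading, Submodule.span_mul_span, Submodule.span_le]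
    rintro _ ⟨x, hx, y, hy, rfl⟩
    exact (IsWord.mul hx hy).mem_grading
  exact this (Submodule.mul_mem_mul hx hy)

theorem grading_le_eigenspace (k : ℤ) : grading i₀ k ≤ (adEuler i₀).eigenspace k :=
  Submodule.span_le.mpr fun _ hx => Module.End.mem_eigenspace_iff.mpr (IsWord.lie_euler hx)

theorem lie_euler_of_mem_grading {k : ℤ} {x : Weyl n} (hx : x ∈ grading i₀ k) :
    ⁅euler i₀, x⁆ = (k : ℂ) • x :=
  Module.End.mem_eigenspace_iff.mp (grading_le_eigenspace k hx)

theorem zW_dvd_of_mem_grading {k : ℤ} {x : Weyl n} (hx : x ∈ grading i₀ k) (hk : 0 < k) :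
    zW n i₀ ∣ x := by
  induction hx using Submodule.span_induction with
  | mem x hx => exact (dvd_pow_self _ (by omega)).trans (IsWord.pow_dvd hx hk.le)
  | zero => exact dvd_zero _
  | add x y _ _ hx hy => exact dvd_add hx hy
  | smul c x _ hx => obtain ⟨y, rfl⟩ := hx; exact ⟨c • y, (mul_smul_comm c _ y).symm⟩

variable (i₀)

theorem iSupIndep_grading : iSupIndep (grading (n := n) i₀) :=
  ((Module.End.eigenspaces_iSupIndep (adEuler i₀)).comp Int.cast_injective).mono
    grading_le_eigenspace

instance : SetLike.GradedMonoid (grading (n := n) i₀) where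
  one_mem := IsWord.one.mem_grading
  mul_mem _ _ _ _ := mul_mem_grading

theorem iSup_grading_eq_top : ⨆ k, grading (n := n) i₀ k = ⊤ := by
  have hmul : (⨆ k, grading i₀ k) * (⨆ k, grading i₀ k) ≤ ⨆ k, grading (n := n) i₀ k := by
    simp only [Submodule.iSup_mul, Submodule.mul_iSup]
    refine iSup_le fun k => iSup_le fun l => Submodule.mul_le.mpr fun x hx y hy => ?_
    exact Submodule.mem_iSup_of_mem _ (mul_mem_grading hx hy)
  rw [eq_top_iff]
  rintro ⟨x, hx⟩ -
  induction hx using Algebra.adjoin_induction with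
  | mem x hx =>
    rcases hx with ⟨i, rfl⟩ | ⟨i, rfl⟩ <;> obtain rfl | h := eq_or_ne i i₀
    exacts [Submodule.mem_iSup_of_mem _ zW_self_mem_grading,
      Submodule.mem_iSup_of_mem _ (zW_mem_grading h),
      Submodule.mem_iSup_of_mem _ dW_self_mem_grading,
      Submodule.mem_iSup_of_mem _ (dW_mem_grading h)]
  | algebraMap r =>
    exact (Submodule.mem_iSup_of_mem 0 (SetLike.algebraMap_mem_graded (grading i₀) r) :)
  | add x y _ _ hx hy => exact (add_mem hx hy :)
  | mul x y _ _ hx hy => exact hmul (Submodule.mul_mem_mul hx hy)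

noncomputable instance : GradedRing (grading (n := n) i₀) where
  __ := (inferInstance : SetLike.GradedMonoid (grading (n := n) i₀))
  __ := ((DirectSum.isInternal_submodule_iff_iSupIndep_and_iSup_eq_top _).mpr
    ⟨iSupIndep_grading i₀, iSup_grading_eq_top i₀⟩).chooseDecomposition

variable {i₀}

theorem exists_zW_mul_eq_of_mem_span {g : Fin n → Weyl n} (hg : ∀ i, g i ∈ grading i₀ 0) {k : ℤ}
    (hk : 0 < k) {x : Weyl n} (hx : x ∈ grading i₀ k) (hxI : x ∈ Ideal.span (Set.range g)) :
    ∃ w ∈ Ideal.span (Set.range g), zW n i₀ * w = x := by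
  obtain ⟨c, hc, rfl⟩ := Ideal.exists_homogeneous_fun_of_mem_span_range hg hx hxI
  choose y hy using fun i => zW_dvd_of_mem_grading (hc i) hk
  refine ⟨∑ i, y i * g i,
    Ideal.sum_mem _ fun i _ => Ideal.mul_mem_left _ _ (Ideal.subset_span ⟨i, rfl⟩), ?_⟩
  simp only [Finset.mul_sum, hy, mul_assoc]

theorem zW_mul_dW_add_algebraMap_mem_grading (i : Fin n) (a : ℂ) :
    zW n i * dW n i + algebraMap ℂ (Weyl n) a ∈ grading i₀ 0 := by
  refine add_mem ?_ (SetLike.algebraMap_mem_graded _ a)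
  obtain rfl | h := eq_or_ne i i₀
  · simpa using mul_mem_grading zW_self_mem_grading dW_self_mem_grading
  · simpa using mul_mem_grading (zW_mem_grading h) (dW_mem_grading h)

variable (i₀) in
theorem isHomogeneous_eulerIdeal (α : Fin n → ℂ) : (eulerIdeal α).IsHomogeneous (grading i₀) :=
  Ideal.homogeneous_span _ _ <| by
    rintro _ ⟨i, rfl⟩
    exact ⟨0, zW_mul_dW_add_algebraMap_mem_grading i (α i)⟩

/-- `∂₁ z₁ x = (θ + 1) x = x θ + (j + 1) x` for `x` of degree `j`. -/
theorem sub_smul_eq_of_lie_euler {j : ℤ} {x : Weyl n} (hx : ⁅euler i₀, x⁆ = (j : ℂ) • x)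
    (a : ℂ) : (a - (j + 1)) • x =
      x * (zW n i₀ * dW n i₀ + algebraMap ℂ (Weyl n) a) - dW n i₀ * (zW n i₀ * x) := by
  rw [Ring.lie_def, euler, sub_eq_iff_eq_add] at hx
  rw [mul_add, ← Algebra.commutes, ← Algebra.smul_def, ← mul_assoc (dW n i₀), dW_mul_zW_self,
    add_mul, one_mul, hx]
  module

theorem mem_eulerIdeal_of_zW_mul_mem_of_mem_grading {α : Fin n → ℂ} (hα : ∀ k : ℕ, α i₀ ≠ -k)
    {j : ℤ} {x : Weyl n} (hx : x ∈ grading i₀ j) (h : zW n i₀ * x ∈ eulerIdeal α) :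
    x ∈ eulerIdeal α := by
  rcases le_or_gt 0 j with hj | hj
  · obtain ⟨w, hw, hwx⟩ := exists_zW_mul_eq_of_mem_span
      (fun i => zW_mul_dW_add_algebraMap_mem_grading i (α i)) (by omega : 0 < 1 + j)
      (mul_mem_grading zW_self_mem_grading hx) h
    rwa [← isLeftRegular_zW i₀ hwx]
  · have hs : α i₀ - (j + 1) ≠ 0 := by
      have h := hα (-(j + 1)).toNat
      rw [← Int.cast_natCast, Int.toNat_of_nonneg (by omega)] at h
      push_cast at h
      rwa [neg_neg, ← sub_ne_zero] at h
    rw [← inv_smul_smul₀ hs x, sub_smul_eq_of_lie_euler (lie_euler_of_mem_grading hx)]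
    exact Submodule.smul_of_tower_mem _ _ <| sub_mem
      (Ideal.mul_mem_left _ x (Ideal.subset_span ⟨i₀, rfl⟩)) (Ideal.mul_mem_left _ _ h)

theorem mem_eulerIdeal_of_zW_mul_mem {α : Fin n → ℂ} (hα : ∀ k : ℕ, α i₀ ≠ -k) {m : Weyl n}
    (h : zW n i₀ * m ∈ eulerIdeal α) : m ∈ eulerIdeal α := by
  have hI := isHomogeneous_eulerIdeal i₀ α
  refine (Ideal.IsHomogeneous.mem_iff _ hI).mpr fun j =>
    mem_eulerIdeal_of_zW_mul_mem_of_mem_grading hα (SetLike.coe_mem _) ?_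
  rw [← DirectSum.coe_decompose_mul_add_of_left_mem _ zW_self_mem_grading]
  exact (Ideal.IsHomogeneous.mem_iff _ hI).mp h (1 + j)

end Weyl

/-- Let `α₁,…,αₙ ∈ ℂ` with `α₁ ∉ {0,−1,−2,…}`, and let
`I = ∑ᵢ D·(zᵢ∂ᵢ + αᵢ)` be the left ideal generated by the `zᵢ∂ᵢ + αᵢ`.
If `z₁·m ∈ I` then `m ∈ I`; in other words, multiplication by `z₁` is injective
on the left `D`-module `M = D/I`. -/
theorem z_mul_mem_ideal (n : ℕ) (hn : 0 < n) (α : Fin n → ℂ)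
    (hα : ∀ k : ℕ, α ⟨0, hn⟩ ≠ -(k : ℂ)) :
    (∀ m : Weyl n,
        zW n ⟨0, hn⟩ * m ∈ Submodule.span (Weyl n)
            (Set.range fun i => zW n i * dW n i + algebraMap ℂ (Weyl n) (α i)) →
        m ∈ Submodule.span (Weyl n)
            (Set.range fun i => zW n i * dW n i + algebraMap ℂ (Weyl n) (α i))) ∧
    Function.Injective
      (fun m : Weyl n ⧸ Submodule.span (Weyl n)
          (Set.range fun i => zW n i * dW n i + algebraMap ℂ (Weyl n) (α i)) =>
        zW n ⟨0, hn⟩ • m) := by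
  have h : ∀ m, zW n ⟨0, hn⟩ * m ∈ Weyl.eulerIdeal α → m ∈ Weyl.eulerIdeal α :=
    fun _ => Weyl.mem_eulerIdeal_of_zW_mul_mem hα
  exact ⟨h, Submodule.smul_injective_quotient_of_mul_mem h⟩
end

section
/- Let D be the first Weyl algebra over ℂ with generators z, ∂, relation [∂,z] = 1, and let α ∈ ℂ with α ∉ {0,−1,−2,...}. Then the left D-module M = D/D·(z∂ + α) has no z-torsion: if m ∈ M satisfies z·m = 0 then m = 0. -/
/-!
The `n`-th Weyl algebra over `ℂ`, realized concretely as the subalgebra of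
`ℂ`-linear endomorphisms of the polynomial ring `ℂ[z₁,…,zₙ]` generated by the
multiplication operators `zᵢ` and the partial derivative operators `∂ᵢ`
(these satisfy `[∂ᵢ, zⱼ] = δᵢⱼ`, all other generators commuting).
-/

open MvPolynomial

set_option synthInstance.maxHeartbeats 1000000
set_option maxHeartbeats 1000000

/-!
Since `α ∉ {0, -1, -2, …}`, the operator `z∂ + α` acts on `zᵏ` by the nonzero scalar `k + α`,
so it is surjective on `ℂ[z]`. Hence if `z·a = b·(z∂ + α)` in `D`, then `b` maps `ℂ[z]` into
`z·ℂ[z]`. Writing `b = ∑ⱼ pⱼ(z) ∂ʲ`, the constant term of `b zᵏ` is `k! pₖ(0)`, so every `pₖ` is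
divisible by `z` and `b = z·c` with `c ∈ D`. Multiplication by `z` is injective, so
`a = c·(z∂ + α)`.
-/

theorem mulLeft_mem_weyl (n : ℕ) (p : MvPolynomial (Fin n) ℂ) :
    LinearMap.mulLeft ℂ p ∈ Weyl n := by
  have hp : LinearMap.mulLeft ℂ p ∈ (Algebra.adjoin ℂ (Set.range X)).map (Algebra.lmul ℂ _) :=
    Subalgebra.mem_map.2 ⟨p, adjoin_range_X (R := ℂ) (σ := Fin n) ▸ Algebra.mem_top, rfl⟩
  rw [AlgHom.map_adjoin, ← Set.range_comp] at hp
  refine Algebra.adjoin_mono ?_ hp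
  exact Set.range_subset_iff.2 fun i => Or.inl ⟨i, rfl⟩

theorem isLeftRegular_zEnd (n : ℕ) (i : Fin n) : IsLeftRegular (zEnd n i) :=
  fun _ _ h => LinearMap.ext fun q => mul_left_cancel₀ (X_ne_zero i) (LinearMap.congr_fun h q)

theorem zEnd_mul_dEnd_add_algebraMap_monomial (n : ℕ) (i : Fin n) (α : ℂ) (m : Fin n →₀ ℕ)
    (c : ℂ) :
    (zEnd n i * dEnd n i + algebraMap ℂ (Module.End ℂ (MvPolynomial (Fin n) ℂ)) α)
      (monomial m c) = ((m i : ℂ) + α) • monomial m c := by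
  rw [LinearMap.add_apply, Module.algebraMap_end_apply, Module.End.mul_apply, add_smul]
  exact congrArg (· + _) (X_mul_pderiv_monomial.trans (Nat.cast_smul_eq_nsmul ℂ _ _).symm)

theorem zEnd_mul_dEnd_add_algebraMap_surjective (n : ℕ) (i : Fin n) {α : ℂ}
    (hα : ∀ k : ℕ, α ≠ -(k : ℂ)) :
    Function.Surjective
      (zEnd n i * dEnd n i + algebraMap ℂ (Module.End ℂ (MvPolynomial (Fin n) ℂ)) α) := by
  intro r
  induction r using MvPolynomial.induction_on' with
  | monomial m c =>
    have hne : (m i : ℂ) + α ≠ 0 := fun h => hα (m i) (by linear_combination h)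
    refine ⟨((m i : ℂ) + α)⁻¹ • monomial m c, ?_⟩
    rw [map_smul, zEnd_mul_dEnd_add_algebraMap_monomial, inv_smul_smul₀ hne]
  | add p q hp hq =>
    obtain ⟨p', rfl⟩ := hp
    obtain ⟨q', rfl⟩ := hq
    exact ⟨p' + q', map_add _ _ _⟩

theorem X_dvd_of_constantCoeff_eq_zero {σ R : Type*} [CommSemiring R] [Subsingleton σ] (i : σ)
    {p : MvPolynomial σ R} (hp : constantCoeff p = 0) : X i ∣ p := by
  have : p ∈ Ideal.span (X '' {i}) := by
    refine mem_ideal_span_X_image.2 fun m hm => ⟨i, rfl, fun hmi => ?_⟩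
    have hm0 : m = 0 := Finsupp.ext fun j => by rwa [Subsingleton.elim j i]
    rw [mem_support_iff, hm0, ← constantCoeff_eq] at hm
    exact hm hp
  rw [Set.image_singleton] at this
  exact Ideal.mem_span_singleton.1 this

noncomputable def normalOrdered :
    (ℕ →₀ MvPolynomial (Fin 1) ℂ) →ₗ[ℂ] Module.End ℂ (MvPolynomial (Fin 1) ℂ) :=
  Finsupp.lsum ℂ fun j => LinearMap.mulRight ℂ (dEnd 1 0 ^ j) ∘ₗ LinearMap.mul ℂ _

theorem normalOrdered_apply (p : ℕ →₀ MvPolynomial (Fin 1) ℂ) :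
    normalOrdered p = p.sum fun j q => LinearMap.mulLeft ℂ q * dEnd 1 0 ^ j :=
  Finsupp.lsum_apply _ _ _

theorem normalOrdered_single (j : ℕ) (q : MvPolynomial (Fin 1) ℂ) :
    normalOrdered (Finsupp.single j q) = LinearMap.mulLeft ℂ q * dEnd 1 0 ^ j :=
  Finsupp.lsum_single _ _ _ _

theorem zEnd_mul_mem_range_normalOrdered {b : Module.End ℂ (MvPolynomial (Fin 1) ℂ)}
    (hb : b ∈ LinearMap.range normalOrdered) :
    zEnd 1 0 * b ∈ LinearMap.range normalOrdered := by
  obtain ⟨p, rfl⟩ := hb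
  induction p using Finsupp.induction_linear with
  | zero => simp
  | add p q hp hq => simpa only [map_add, mul_add] using add_mem hp hq
  | single j q =>
    refine ⟨Finsupp.single j (X 0 * q), ?_⟩
    rw [normalOrdered_single, normalOrdered_single, ← mul_assoc, LinearMap.mulLeft_mul]
    rfl

theorem dEnd_mul_mem_range_normalOrdered {b : Module.End ℂ (MvPolynomial (Fin 1) ℂ)}
    (hb : b ∈ LinearMap.range normalOrdered) :
    dEnd 1 0 * b ∈ LinearMap.range normalOrdered := by
  obtain ⟨p, rfl⟩ := hb
  induction p using Finsupp.induction_linear with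
  | zero => simp
  | add p q hp hq => simpa only [map_add, mul_add] using add_mem hp hq
  | single j q =>
    have leibniz : dEnd 1 0 * LinearMap.mulLeft ℂ q =
        LinearMap.mulLeft ℂ (pderiv 0 q) + LinearMap.mulLeft ℂ q * dEnd 1 0 :=
      LinearMap.ext fun r => by
        change pderiv 0 (q * r) = pderiv 0 q * r + q * pderiv 0 r
        exact pderiv_mul
    refine ⟨Finsupp.single j (pderiv 0 q) + Finsupp.single (j + 1) q, ?_⟩
    rw [map_add, normalOrdered_single, normalOrdered_single, normalOrdered_single, ← mul_assoc,
      leibniz, add_mul, mul_assoc, pow_succ']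

theorem mem_range_normalOrdered_of_mem_weyl {b : Module.End ℂ (MvPolynomial (Fin 1) ℂ)}
    (hb : b ∈ Weyl 1) : b ∈ LinearMap.range normalOrdered := by
  suffices h : ∀ y ∈ LinearMap.range normalOrdered, b * y ∈ LinearMap.range normalOrdered by
    simpa only [mul_one] using h 1 ⟨Finsupp.single 0 1, by
      rw [normalOrdered_single, pow_zero, mul_one, LinearMap.mulLeft_one, Module.End.one_eq_id]⟩
  induction hb using Algebra.adjoin_induction with
  | mem x hx =>
    rcases hx with ⟨i, rfl⟩ | ⟨i, rfl⟩ <;> rw [Subsingleton.elim i 0]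
    exacts [fun _ => zEnd_mul_mem_range_normalOrdered, fun _ => dEnd_mul_mem_range_normalOrdered]
  | algebraMap c =>
    exact fun y hy => by simpa only [Algebra.smul_def] using Submodule.smul_mem _ c hy
  | add x x' _ _ hx hx' =>
    exact fun y hy => by simpa only [add_mul] using add_mem (hx y hy) (hx' y hy)
  | mul x x' _ _ hx hx' => exact fun y hy => by simpa only [mul_assoc] using hx _ (hx' y hy)

theorem constantCoeff_dEnd_pow_X_pow (j k : ℕ) :
    constantCoeff ((dEnd 1 0 ^ j) (X 0 ^ k)) = if j = k then (k.factorial : ℂ) else 0 := by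
  induction j generalizing k with
  | zero => cases k <;> simp
  | succ j ih =>
    cases k with
    | zero => simp [pow_succ, dEnd]
    | succ k =>
      have hd : dEnd 1 0 (X 0 ^ (k + 1)) = ((k + 1 : ℕ) : ℂ) • X 0 ^ k := by
        simp [dEnd, smul_eq_C_mul]
      rw [pow_succ, Module.End.mul_apply, hd, map_smul, constantCoeff_smul, ih]
      simp [Nat.factorial_succ]

theorem constantCoeff_normalOrdered_X_pow (p : ℕ →₀ MvPolynomial (Fin 1) ℂ) (k : ℕ) :
    constantCoeff (normalOrdered p (X 0 ^ k)) = constantCoeff (p k) * k.factorial := by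
  simp +contextual [normalOrdered_apply, Finsupp.sum, LinearMap.sum_apply,
    constantCoeff_dEnd_pow_X_pow]

theorem exists_mem_weyl_zEnd_mul_eq {b : Module.End ℂ (MvPolynomial (Fin 1) ℂ)}
    (hb : b ∈ Weyl 1) (h : ∀ q, constantCoeff (b q) = 0) :
    ∃ c ∈ Weyl 1, zEnd 1 0 * c = b := by
  obtain ⟨p, rfl⟩ := mem_range_normalOrdered_of_mem_weyl hb
  have hdvd (k : ℕ) : X 0 ∣ p k := by
    refine X_dvd_of_constantCoeff_eq_zero 0 ?_
    have hk := h (X 0 ^ k)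
    rw [constantCoeff_normalOrdered_X_pow] at hk
    exact (mul_eq_zero.1 hk).resolve_right (Nat.cast_ne_zero.2 k.factorial_ne_zero)
  choose r hr using hdvd
  refine ⟨∑ k ∈ p.support, LinearMap.mulLeft ℂ (r k) * dEnd 1 0 ^ k,
    sum_mem fun k _ => mul_mem (mulLeft_mem_weyl 1 _) (pow_mem (dW 1 0).2 _), ?_⟩
  rw [normalOrdered_apply, Finsupp.sum, Finset.mul_sum]
  refine Finset.sum_congr rfl fun k _ => ?_
  rw [← mul_assoc, hr k, LinearMap.mulLeft_mul]
  rfl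

/-- Let `D` be the first Weyl algebra, `α ∈ ℂ` with
`α ∉ {0,−1,−2,…}`. Then the left `D`-module `M = D/D·(z∂ + α)` has no
`z`-torsion: if `z·m = 0` in `M` then `m = 0`. -/
theorem no_z_torsion (α : ℂ) (hα : ∀ k : ℕ, α ≠ -(k : ℂ)) :
    ∀ m : Weyl 1 ⧸ Submodule.span (Weyl 1)
        {zW 1 0 * dW 1 0 + algebraMap ℂ (Weyl 1) α},
      zW 1 0 • m = 0 → m = 0 := by
  intro m hm
  obtain ⟨a, rfl⟩ := Submodule.Quotient.mk_surjective _ m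
  rw [← Submodule.Quotient.mk_smul, Submodule.Quotient.mk_eq_zero,
    Submodule.mem_span_singleton] at hm
  obtain ⟨b, hb⟩ := hm
  replace hb : (b : Module.End ℂ (MvPolynomial (Fin 1) ℂ)) *
      (zEnd 1 0 * dEnd 1 0 + algebraMap ℂ _ α) = zEnd 1 0 * a := congrArg Subtype.val hb
  have hb_vanish (q : MvPolynomial (Fin 1) ℂ) : constantCoeff ((b : Module.End ℂ _) q) = 0 := by
    obtain ⟨q', rfl⟩ := zEnd_mul_dEnd_add_algebraMap_surjective 1 0 hα q
    rw [← Module.End.mul_apply, hb, Module.End.mul_apply, zEnd, LinearMap.mulLeft_apply,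
      map_mul, constantCoeff_X, zero_mul]
  obtain ⟨c, hc, hcb⟩ := exists_mem_weyl_zEnd_mul_eq b.2 hb_vanish
  have hca : c * (zEnd 1 0 * dEnd 1 0 + algebraMap ℂ _ α) = a :=
    isLeftRegular_zEnd 1 0 <| show zEnd 1 0 * _ = _ by rw [← mul_assoc, hcb, hb]
  rw [Submodule.Quotient.mk_eq_zero, Submodule.mem_span_singleton]
  exact ⟨⟨c, hc⟩, Subtype.ext hca⟩
end
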